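/- Let a and b be coprime integers with a ≥ 2 and b ≥ 2, and let k ≥ 0. Then (k+1)ab - a - b is the greatest nonnegative integer with at most k representations in the form ma + nb with m, n ∈ ℕ; that is, r(a,b;(k+1)ab-a-b) ≤ k, and every j > (k+1)ab - a - b satisfies r(a,b;j) > k. -/
import Mathlib


/-- `repCount a b j` is the number of representations of `j` in the form
`m * a + n * b` with `m, n : ℕ`. -/
noncomputable def repCount (a b j : ℕ) : ℕ :=
  Nat.card {p : ℕ × ℕ // p.1 * a + p.2 * b = j}

section Aux

variable {a b : ℕ}

/-- The finset of representations of `j`. -/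
private def repSet (a b j : ℕ) : Finset (ℕ × ℕ) :=
  (Finset.range (j + 1) ×ˢ Finset.range (j + 1)).filter (fun p => p.1 * a + p.2 * b = j)

private lemma mem_repSet (ha : 1 ≤ a) (hb : 1 ≤ b) {j : ℕ} {p : ℕ × ℕ} :
    p ∈ repSet a b j ↔ p.1 * a + p.2 * b = j := by
  simp only [repSet, Finset.mem_filter, Finset.mem_product, Finset.mem_range]
  constructor
  · tauto
  · intro h
    have h1 : p.1 ≤ p.1 * a := Nat.le_mul_of_pos_right _ ha
    have h2 : p.2 ≤ p.2 * b := Nat.le_mul_of_pos_right _ hb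
    exact ⟨⟨by omega, by omega⟩, h⟩

private lemma repCount_eq (ha : 1 ≤ a) (hb : 1 ≤ b) (j : ℕ) :
    repCount a b j = (repSet a b j).card := by
  have hset : {p : ℕ × ℕ | p.1 * a + p.2 * b = j} = ↑(repSet a b j) := by
    ext p; simp [mem_repSet ha hb]
  calc repCount a b j
      = Nat.card {p : ℕ × ℕ | p.1 * a + p.2 * b = j} := rfl
    _ = ({p : ℕ × ℕ | p.1 * a + p.2 * b = j} : Set (ℕ × ℕ)).ncard := Nat.card_coe_set_eq _
    _ = (repSet a b j).card := by rw [hset, Set.ncard_coe_finset]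

private lemma repCount_add_mul (ha : 2 ≤ a) (hb : 2 ≤ b) (hab : Nat.Coprime a b) (j : ℕ) :
    repCount a b (j + a * b) = repCount a b j + 1 := by
  have ha1 : 1 ≤ a := by omega
  have hb1 : 1 ≤ b := by omega
  haveI : NeZero b := ⟨by omega⟩
  rw [repCount_eq ha1 hb1, repCount_eq ha1 hb1]
  set s := repSet a b (j + a * b) with hs
  -- the unique representation with first coordinate < b
  set x : ZMod b := (j : ZMod b) * (a : ZMod b)⁻¹ with hx
  set m0 : ℕ := x.val with hm0def
  have hm0 : m0 < b := ZMod.val_lt x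
  have hu : IsUnit (a : ZMod b) := (ZMod.isUnit_iff_coprime a b).mpr hab
  have hmod : m0 * a ≡ j [MOD b] := by
    have key : ((m0 * a : ℕ) : ZMod b) = ((j : ℕ) : ZMod b) := by
      push_cast
      rw [hm0def, ZMod.natCast_val, ZMod.cast_id, hx, mul_assoc,
        ZMod.inv_mul_of_unit _ hu, mul_one]
    exact (ZMod.natCast_eq_natCast_iff _ _ _).mp key
  have hmod' : m0 * a ≡ j + a * b [MOD b] := by
    have : j ≡ j + a * b [MOD b] := (Nat.modEq_iff_dvd' (Nat.le_add_right _ _)).mpr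
      (by simp)
    exact hmod.trans this
  have hle : m0 * a ≤ j + a * b := by
    have : m0 * a < b * a := Nat.mul_lt_mul_of_lt_of_le hm0 le_rfl (by omega)
    calc m0 * a ≤ b * a := le_of_lt this
      _ = a * b := mul_comm b a
      _ ≤ j + a * b := Nat.le_add_left _ _
  have hdvd : b ∣ j + a * b - m0 * a := (Nat.modEq_iff_dvd' hle).mp hmod'
  set n0 : ℕ := (j + a * b - m0 * a) / b with hn0def
  have hn0 : n0 * b = j + a * b - m0 * a := Nat.div_mul_cancel hdvd
  have heq : m0 * a + n0 * b = j + a * b := by rw [hn0, Nat.add_sub_cancel' hle]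
  -- part 2: the small-first-coordinate part is a singleton
  have h2 : s.filter (fun p => p.1 < b) = {(m0, n0)} := by
    ext p
    simp only [Finset.mem_filter, Finset.mem_singleton, hs, mem_repSet ha1 hb1]
    constructor
    · rintro ⟨hp, hlt⟩
      have e1 : (p.1 * a + p.2 * b) % b = p.1 * a % b := Nat.add_mul_mod_self_right _ _ _
      have e2 : (m0 * a + n0 * b) % b = m0 * a % b := Nat.add_mul_mod_self_right _ _ _
      have hc : p.1 * a ≡ m0 * a [MOD b] := by
        show p.1 * a % b = m0 * a % b
        rw [← e1, ← e2, hp, heq]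
      have hmm : p.1 ≡ m0 [MOD b] := Nat.ModEq.cancel_right_of_coprime hab.symm hc
      have hm : p.1 = m0 := by
        have := hmm
        rwa [Nat.ModEq, Nat.mod_eq_of_lt hlt, Nat.mod_eq_of_lt hm0] at this
      have hn : p.2 = n0 := by
        rw [hm] at hp
        have h' : m0 * a + p.2 * b = m0 * a + n0 * b := hp.trans heq.symm
        exact Nat.eq_of_mul_eq_mul_right (by omega) (Nat.add_left_cancel h')
      exact Prod.ext hm hn
    · rintro rfl
      exact ⟨heq, hm0⟩
  -- part 1: the large-first-coordinate part is in bijection with representations of j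
  have h1 : s.filter (fun p => ¬ p.1 < b) = (repSet a b j).image (fun p => (p.1 + b, p.2)) := by
    ext p
    simp only [Finset.mem_filter, Finset.mem_image, hs, mem_repSet ha1 hb1, not_lt]
    constructor
    · rintro ⟨hp, hbp⟩
      refine ⟨(p.1 - b, p.2), ?_, by simp [Prod.ext_iff]; omega⟩
      obtain ⟨m', hm'⟩ : ∃ m', p.1 = m' + b := ⟨p.1 - b, by omega⟩
      rw [hm'] at hp ⊢
      simp only [Nat.add_sub_cancel]
      show m' * a + p.2 * b = j
      zify at hp ⊢
      linear_combination hp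
    · rintro ⟨q, hq, rfl⟩
      constructor
      · show (q.1 + b) * a + q.2 * b = j + a * b
        zify at hq ⊢
        linear_combination hq
      · simp
  have hinj : Function.Injective (fun p : ℕ × ℕ => (p.1 + b, p.2)) := by
    intro p q h
    simp only [Prod.mk.injEq] at h
    exact Prod.ext (by omega) h.2
  have hcard := Finset.card_filter_add_card_filter_not
    (s := s) (p := fun p => p.1 < b)
  rw [h2, h1, Finset.card_image_of_injective _ hinj, Finset.card_singleton] at hcard
  omega

private lemma repCount_add_mul_k (ha : 2 ≤ a) (hb : 2 ≤ b) (hab : Nat.Coprime a b)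
    (j k : ℕ) : repCount a b (j + k * (a * b)) = repCount a b j + k := by
  induction k with
  | zero => simp
  | succ k ih =>
    have : j + (k + 1) * (a * b) = j + k * (a * b) + a * b := by ring
    rw [this, repCount_add_mul ha hb hab, ih]
    omega

private lemma repCount_frob (ha : 2 ≤ a) (hb : 2 ≤ b) (hab : Nat.Coprime a b) :
    repCount a b (a * b - a - b) = 0 := by
  have ha1 : 1 ≤ a := by omega
  have hb1 : 1 ≤ b := by omega
  rw [repCount_eq ha1 hb1, Finset.card_eq_zero]
  apply Finset.eq_empty_of_forall_notMem
  rintro ⟨m, n⟩ hp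
  rw [mem_repSet ha1 hb1] at hp
  have hfrob := frobeniusNumber_pair hab (by omega) (by omega)
  exact hfrob.1 ((AddSubmonoid.mem_closure_pair a b _).mpr
    ⟨m, n, by simpa [smul_eq_mul] using hp⟩)

private lemma repCount_pos (ha : 2 ≤ a) (hb : 2 ≤ b) (hab : Nat.Coprime a b)
    {j : ℕ} (hj : a * b - a - b < j) : 1 ≤ repCount a b j := by
  have ha1 : 1 ≤ a := by omega
  have hb1 : 1 ≤ b := by omega
  have hfrob := frobeniusNumber_pair hab (by omega) (by omega)
  have hjmem : j ∈ AddSubmonoid.closure ({a, b} : Set ℕ) := by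
    by_contra hnot
    exact absurd (hfrob.2 hnot) (by omega)
  obtain ⟨m, n, hmn⟩ := (AddSubmonoid.mem_closure_pair a b j).mp hjmem
  rw [repCount_eq ha1 hb1]
  exact Finset.card_pos.mpr ⟨(m, n), (mem_repSet ha1 hb1).mpr (by simpa [smul_eq_mul] using hmn)⟩

end Aux

/-- For coprime `a, b ≥ 2` and `k ≥ 0`, the number `(k+1)ab - a - b` has at most `k`
representations as `m*a + n*b` with `m, n : ℕ`, and every larger integer has more than
`k` such representations. -/
theorem g_le_k_eq (a b k : ℕ) (ha : 2 ≤ a) (hb : 2 ≤ b) (hab : Nat.Coprime a b) :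
    repCount a b ((k + 1) * a * b - a - b) ≤ k ∧
      ∀ j : ℕ, (k + 1) * a * b - a - b < j → k < repCount a b j := by
  have hmn : a + b ≤ a * b := Nat.add_le_mul ha hb
  have e : (k + 1) * a * b - a - b = (a * b - a - b) + k * (a * b) := by
    have h1 : (k + 1) * a * b = a * b + k * (a * b) := by ring
    rw [h1]
    generalize k * (a * b) = d
    generalize a * b = c at hmn ⊢
    omega
  constructor
  · rw [e, repCount_add_mul_k ha hb hab, repCount_frob ha hb hab]
    omega
  · intro j hj
    rw [e] at hj
    have hd : k * (a * b) ≤ j := by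
      generalize k * (a * b) = d at hj ⊢
      omega
    have hj2 : a * b - a - b < j - k * (a * b) := by
      generalize k * (a * b) = d at hj hd ⊢
      generalize a * b - a - b = c at hj ⊢
      omega
    have hrw : j = (j - k * (a * b)) + k * (a * b) := by omega
    rw [hrw, repCount_add_mul_k ha hb hab]
    have := repCount_pos ha hb hab hj2
    omega
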